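/- Let 𝒜 be the noncrossing algebra of a finite Coxeter group W with Coxeter element γ, and for 1 ≤ k ≤ n define the ℤ-linear maps d, δ : 𝒜_k → 𝒜_{k−1} by d(a_{t₁}⋯a_{t_k}) = Σ_{i=1}^k (−1)^{k−i} a_{t₁}⋯â_{t_i}⋯a_{t_k} and δ(a_{t₁}⋯a_{t_k}) = Σ_{i=1}^k (−1)^{i−1} a_{t₁^{t_i}}⋯a_{t_{i−1}^{t_i}} â_{t_i} a_{t_{i+1}}⋯a_{t_k} (hat means omission, s^u := u⁻¹su). Then d and δ are well-defined, d² = 0, δ² = 0, and d δ = δ d. -/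

import Mathlib

/-!
Both maps are alternating sums of faces: for an action `act` of reflections on reflections, the
`i`-th face of `t₁ ⋯ t_k` deletes `tᵢ` and replaces each earlier `tⱼ` by `act tⱼ tᵢ`; `d` uses the
trivial action and `δ` conjugation. On words the face sum `D` satisfies
`D(l t) = D(l) a_t ± a_{l^t}`, and induction on the length gives `D_a D_a = 0` and
`D_a D_b + D_b D_a = 0` as soon as `a (b s u) t = b (a s t) (a u t)`.
A face of a noncrossing word is noncrossing (it is one letter shorter and its product is the old
one times a reflection), so extending by zero off noncrossing words gives maps on the free algebra
satisfying the same identities. They descend to `𝒜`: a word containing `t t` or a pair `t₁ t₂ ≰ γ`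
is not noncrossing, and when the relation `Σ_{t₁ t₂ = w} a_{t₁} a_{t₂}` sits inside noncrossing
words, the two faces deleting a letter of the pair cancel under the Hurwitz move
`(t₁, t₂) ↦ (t₂, t₁^{t₂})`, while every other face still contains a (conjugated) copy of the
relation.
-/

open scoped Classical

/-- The absolute (reflection) length of `w`. -/
noncomputable def absLen {B : Type*} {W : Type*} [Group W] {M : CoxeterMatrix B}
    (cs : CoxeterSystem M W) (w : W) : ℕ :=
  sInf {k : ℕ | ∃ l : List W, (∀ t ∈ l, cs.IsReflection t) ∧ l.length = k ∧ l.prod = w}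

/-- The absolute order on `W`: `u ≤ v` iff `ℓ_T(v) = ℓ_T(u) + ℓ_T(u⁻¹v)`. -/
def absLe {B : Type*} {W : Type*} [Group W] {M : CoxeterMatrix B}
    (cs : CoxeterSystem M W) (u v : W) : Prop :=
  absLen cs v = absLen cs u + absLen cs (u⁻¹ * v)

/-- The set of reflections of a Coxeter system, as a type. -/
abbrev Refl {B : Type*} {W : Type*} [Group W] {M : CoxeterMatrix B}
    (cs : CoxeterSystem M W) : Type _ := {t : W // cs.IsReflection t}

/-- Conjugation `s^u := u⁻¹ s u` of a reflection by a group element. -/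
def conjR {B : Type*} {W : Type*} [Group W] {M : CoxeterMatrix B}
    {cs : CoxeterSystem M W} (s : Refl cs) (u : W) : Refl cs :=
  ⟨u⁻¹ * (s : W) * u, by have := s.2.conj u⁻¹; rwa [inv_inv] at this⟩

/-- The monomial `a_{t₁} ⋯ a_{t_k}` in the free algebra over `ℤ`. -/
noncomputable def mono {B : Type*} {W : Type*} [Group W] {M : CoxeterMatrix B}
    (cs : CoxeterSystem M W) (l : List (Refl cs)) : FreeAlgebra ℤ (Refl cs) :=
  (l.map (FreeAlgebra.ι ℤ)).prod

/-- A list of reflections is *noncrossing-reduced* if it is a `T`-reduced word for its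
product and this product is `≤ γ` in the absolute order. -/
def IsNCWord {B : Type*} {W : Type*} [Group W] {M : CoxeterMatrix B}
    (cs : CoxeterSystem M W) (γ : W) (l : List (Refl cs)) : Prop :=
  absLen cs ((l.map Subtype.val).prod) = l.length ∧
    absLe cs ((l.map Subtype.val).prod) γ

/-- The defining relations of the noncrossing algebra `𝒜 = 𝒜(W, γ)`. -/
inductive NCRel {B : Type*} {W : Type*} [Group W] [Fintype W] {M : CoxeterMatrix B}
    (cs : CoxeterSystem M W) (γ : W) :
    FreeAlgebra ℤ (Refl cs) → FreeAlgebra ℤ (Refl cs) → Prop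
  | sq (t : Refl cs) :
      NCRel cs γ (FreeAlgebra.ι ℤ t * FreeAlgebra.ι ℤ t) 0
  | ncross (t₁ t₂ : Refl cs) (h : ¬ absLe cs ((t₁ : W) * (t₂ : W)) γ) :
      NCRel cs γ (FreeAlgebra.ι ℤ t₁ * FreeAlgebra.ι ℤ t₂) 0
  | sum (w : W) (h : absLen cs w = 2) (hw : absLe cs w γ) :
      NCRel cs γ
        (∑ p : Refl cs × Refl cs,
          if (p.1 : W) * (p.2 : W) = w then
            FreeAlgebra.ι ℤ p.1 * FreeAlgebra.ι ℤ p.2 else 0) 0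

section Descent

variable {R A N : Type*} [CommRing R] [Ring A] [Algebra R A] [AddCommGroup N] [Module R N]

theorem RingQuot.ker_mkAlgHom_le {s : A → A → Prop} {f : A →ₗ[R] N}
    (hf : ∀ ⦃x y⦄, s x y → ∀ a b, f (a * (x - y) * b) = 0) :
    LinearMap.ker (RingQuot.mkAlgHom R s).toLinearMap ≤ LinearMap.ker f := by
  let P : Submodule R A :=
    { carrier := {z | ∀ a b, f (a * z * b) = 0}
      add_mem' := fun hz hz' a b => by simp [mul_add, add_mul, hz a b, hz' a b]
      zero_mem' := fun a b => by simp
      smul_mem' := fun c z hz a b => by simp [hz a b] }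
  have hrel : ∀ ⦃x y⦄, RingQuot.Rel s x y → x - y ∈ P := by
    intro x y hxy
    induction hxy with
    | of h => exact hf h
    | add_left _ ih => simpa using ih
    | mul_left _ ih => exact fun a b => by simpa [sub_mul, mul_assoc] using ih a (_ * b)
    | mul_right _ ih => exact fun a b => by simpa [mul_sub, mul_assoc] using ih (a * _) b
  have heqv : ∀ ⦃x y⦄, Relation.EqvGen (RingQuot.Rel s) x y → x - y ∈ P := by
    intro x y hxy
    induction hxy with
    | rel _ _ h => exact hrel h
    | refl => simp [P.zero_mem]
    | symm _ _ _ ih => simpa using P.neg_mem ih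
    | trans _ _ _ _ _ ih ih' => simpa using P.add_mem ih ih'
  intro x hx
  have hx : RingQuot.mkRingHom s x = RingQuot.mkRingHom s 0 := by
    rw [map_zero, ← RingQuot.mkAlgHom_coe R]
    exact hx
  rw [RingQuot.mkRingHom_def] at hx
  simpa using heqv (Quot.eqvGen_exact (congrArg RingQuot.toQuot hx)) 1 1

theorem RingQuot.exists_lift_linearMap {s : A → A → Prop} {f : A →ₗ[R] N}
    (hf : ∀ ⦃x y⦄, s x y → ∀ a b, f (a * (x - y) * b) = 0) :
    ∃ g : RingQuot s →ₗ[R] N, ∀ x, g (RingQuot.mkAlgHom R s x) = f x := by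
  let π := (RingQuot.mkAlgHom R s).toLinearMap
  have hπ : Function.Surjective π := RingQuot.mkAlgHom_surjective R s
  let g := (LinearMap.ker π).liftQ f (RingQuot.ker_mkAlgHom_le hf)
  refine ⟨g ∘ₗ (π.quotKerEquivOfSurjective hπ).symm.toLinearMap, fun x => ?_⟩
  change g ((π.quotKerEquivOfSurjective hπ).symm (π x)) = f x
  rw [LinearMap.quotKerEquivOfSurjective_symm_apply, Submodule.liftQ_apply]

theorem Module.Basis.forall_mul_mul_eq_zero {ι : Type*} (e : Module.Basis ι R A)
    {g : A →ₗ[R] N} {z : A} (h : ∀ i j, g (e i * z * e j) = 0) (a b : A) :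
    g (a * z * b) = 0 := by
  have hleft : ∀ i, g ∘ₗ LinearMap.mulLeft R (e i * z) = 0 := fun i =>
    e.ext fun j => by simpa [mul_assoc] using h i j
  have hright : g ∘ₗ LinearMap.mulRight R (z * b) = 0 :=
    e.ext fun i => by simpa [mul_assoc] using LinearMap.congr_fun (hleft i) b
  simpa [mul_assoc] using LinearMap.congr_fun hright a

end Descent

theorem List.prod_map_conj {G : Type*} [Group G] (l : List G) (u : G) :
    (l.map fun t => u⁻¹ * t * u).prod = u⁻¹ * l.prod * u := by
  induction l with
  | nil => simp
  | cons t l ih => simp only [List.map_cons, List.prod_cons, ih]; group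

section AbsoluteLength

variable {B W : Type*} [Group W] {M : CoxeterMatrix B} (cs : CoxeterSystem M W)

theorem absLen_prod_le_length {l : List W} (hl : ∀ t ∈ l, cs.IsReflection t) :
    absLen cs l.prod ≤ l.length :=
  Nat.sInf_le ⟨l, hl, rfl, rfl⟩

theorem exists_reflection_word_length_eq_absLen (w : W) :
    ∃ l : List W, (∀ t ∈ l, cs.IsReflection t) ∧ l.length = absLen cs w ∧ l.prod = w := by
  obtain ⟨ω, rfl⟩ := cs.wordProd_surjective w
  refine Nat.sInf_mem (s := {k | ∃ l : List W, (∀ t ∈ l, cs.IsReflection t) ∧ l.length = k ∧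
    l.prod = cs.wordProd ω}) ⟨ω.length, ω.map cs.simple, ?_, by simp, rfl⟩
  simpa using fun i _ => cs.isReflection_simple i

theorem absLen_one : absLen cs (1 : W) = 0 :=
  Nat.le_zero.mp (absLen_prod_le_length cs (l := []) (by simp))

theorem absLen_le_one {t : W} (ht : cs.IsReflection t) : absLen cs t ≤ 1 := by
  simpa using absLen_prod_le_length cs (l := [t]) (by simpa using ht)

theorem absLen_mul_le (x y : W) : absLen cs (x * y) ≤ absLen cs x + absLen cs y := by
  obtain ⟨l₁, hl₁, hlen₁, rfl⟩ := exists_reflection_word_length_eq_absLen cs x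
  obtain ⟨l₂, hl₂, hlen₂, rfl⟩ := exists_reflection_word_length_eq_absLen cs y
  have := absLen_prod_le_length cs (l := l₁ ++ l₂) fun t ht => by
    rcases List.mem_append.mp ht with h | h
    exacts [hl₁ t h, hl₂ t h]
  simpa [hlen₁, hlen₂] using this

theorem absLen_le_add_absLen_inv_mul (x y : W) :
    absLen cs y ≤ absLen cs x + absLen cs (x⁻¹ * y) := by
  simpa using absLen_mul_le cs x (x⁻¹ * y)

theorem absLen_conj_le (u w : W) : absLen cs (u⁻¹ * w * u) ≤ absLen cs w := by
  obtain ⟨l, hl, hlen, rfl⟩ := exists_reflection_word_length_eq_absLen cs w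
  rw [← hlen, ← List.prod_map_conj]
  refine (absLen_prod_le_length cs ?_).trans (by simp)
  simpa using fun t ht => by simpa using (hl t ht).conj u⁻¹

theorem absLen_conj (u w : W) : absLen cs (u⁻¹ * w * u) = absLen cs w := by
  refine (absLen_conj_le cs u w).antisymm ?_
  simpa [mul_assoc] using absLen_conj_le cs u⁻¹ (u⁻¹ * w * u)

end AbsoluteLength

section NoncrossingWords

variable {B W : Type*} [Group W] {M : CoxeterMatrix B} {cs : CoxeterSystem M W} {γ : W}

theorem absLen_prod_val_le_length (l : List (Refl cs)) :
    absLen cs (l.map Subtype.val).prod ≤ l.length := by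
  simpa using absLen_prod_le_length cs (l := l.map Subtype.val) (by simp +contextual)

theorem isNCWord_congr {l l' : List (Refl cs)} (hlen : l.length = l'.length)
    (hprod : (l.map Subtype.val).prod = (l'.map Subtype.val).prod) :
    IsNCWord cs γ l ↔ IsNCWord cs γ l' := by
  rw [IsNCWord, IsNCWord, hlen, hprod]

theorem IsNCWord.of_reflection_mul {l l' : List (Refl cs)} (hl : IsNCWord cs γ l)
    (hlen : l'.length + 1 = l.length) {r : W} (hr : cs.IsReflection r)
    (hprod : (l'.map Subtype.val).prod = r * (l.map Subtype.val).prod) :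
    IsNCWord cs γ l' := by
  obtain ⟨hred, hle⟩ := hl
  unfold absLe at hle
  set w := (l.map Subtype.val).prod
  have h₁ : absLen cs (r * w) ≤ l'.length := hprod ▸ absLen_prod_val_le_length l'
  have h₂ : absLen cs w ≤ 1 + absLen cs (r * w) := by
    have := absLen_mul_le cs r (r * w)
    rw [← mul_assoc, hr.mul_self, one_mul] at this
    linarith [absLen_le_one cs hr]
  have h₃ := absLen_le_add_absLen_inv_mul cs (r * w) γ
  have h₄ : absLen cs ((r * w)⁻¹ * γ) ≤ 1 + absLen cs (w⁻¹ * γ) := by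
    have hconj : cs.IsReflection (w⁻¹ * r * w) := by simpa using hr.conj w⁻¹
    have := absLen_mul_le cs (w⁻¹ * r * w) (w⁻¹ * γ)
    rw [show w⁻¹ * r * w * (w⁻¹ * γ) = (r * w)⁻¹ * γ by rw [mul_inv_rev, hr.inv]; group] at this
    linarith [absLen_le_one cs hconj]
  rw [IsNCWord, absLe, hprod]
  omega

theorem IsNCWord.of_isInfix {l m : List (Refl cs)} (hl : IsNCWord cs γ l) (hm : m <:+: l) :
    IsNCWord cs γ m := by
  obtain ⟨u, v, rfl⟩ := hm
  obtain ⟨hred, hle⟩ := hl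
  unfold absLe at hle
  simp only [List.map_append, List.prod_append, List.length_append] at hred hle
  have hA := absLen_prod_val_le_length u
  have hX := absLen_prod_val_le_length m
  have hV := absLen_prod_val_le_length v
  rw [IsNCWord, absLe]
  set A := (u.map Subtype.val).prod
  set X := (m.map Subtype.val).prod
  set V := (v.map Subtype.val).prod
  have h₁ : absLen cs (A * X * V) ≤ absLen cs A + absLen cs X + absLen cs V :=
    (absLen_mul_le cs _ _).trans (by gcongr; exact absLen_mul_le cs _ _)
  have h₂ : absLen cs (X⁻¹ * γ) ≤ absLen cs A + (absLen cs V + absLen cs ((A * X * V)⁻¹ * γ)) :=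
    calc absLen cs (X⁻¹ * γ)
        = absLen cs (X⁻¹ * A * X * (V * ((A * X * V)⁻¹ * γ))) := by group
      _ ≤ absLen cs (X⁻¹ * A * X) + absLen cs (V * ((A * X * V)⁻¹ * γ)) := absLen_mul_le cs _ _
      _ ≤ _ := by rw [absLen_conj]; gcongr; exact absLen_mul_le cs _ _
  have h₃ := absLen_le_add_absLen_inv_mul cs X γ
  omega

theorem IsNCWord.absLen_pair {u v : List (Refl cs)} {t₁ t₂ : Refl cs}
    (h : IsNCWord cs γ (u ++ [t₁, t₂] ++ v)) :
    absLen cs (t₁ * t₂) = 2 ∧ absLe cs (t₁ * t₂) γ := by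
  simpa [IsNCWord] using h.of_isInfix (List.infix_append u [t₁, t₂] v)

end NoncrossingWords

section ConjugateReflections

variable {B W : Type*} [Group W] {M : CoxeterMatrix B} {cs : CoxeterSystem M W}

@[simp] theorem conjR_conjR (s : Refl cs) (u v : W) : conjR (conjR s u) v = conjR s (u * v) :=
  Subtype.ext (by simp [conjR, mul_assoc])

@[simp] theorem conjR_one (s : Refl cs) : conjR s 1 = s :=
  Subtype.ext (by simp [conjR])

@[simp] theorem val_mul_val_self (t : Refl cs) : (t : W) * t = 1 :=
  t.2.mul_self

theorem conjR_mul_val_self (s t : Refl cs) : (conjR s t : W) * t = t * s := by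
  simp [conjR, mul_assoc, t.2.inv]

theorem val_mul_conjR_self (s t : Refl cs) : (t : W) * conjR s t = s * t := by
  simp [conjR, ← mul_assoc]

theorem conjR_conjR_conjR (s u t : Refl cs) :
    conjR (conjR s u) t = conjR (conjR s t) (conjR u t : W) := by
  simp only [conjR_conjR]
  congr 1
  simp only [conjR]
  group

end ConjugateReflections

section Faces

variable {X : Type*} (act : X → X → X)

def face (l : List X) (i : ℕ) : List X :=
  match l[i]? with
  | some t => (l.take i).map (act · t) ++ l.drop (i + 1)
  | none => l

variable {act}

theorem face_of_getElem?_eq_some {l : List X} {i : ℕ} {t : X} (h : l[i]? = some t) :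
    face act l i = (l.take i).map (act · t) ++ l.drop (i + 1) := by
  simp [face, h]

theorem face_of_lt {l : List X} {i : ℕ} (h : i < l.length) :
    face act l i = (l.take i).map (act · l[i]) ++ l.drop (i + 1) :=
  face_of_getElem?_eq_some (List.getElem?_eq_getElem h)

theorem length_face_add_one {l : List X} {i : ℕ} (h : i < l.length) :
    (face act l i).length + 1 = l.length := by
  rw [face_of_lt h]
  simp
  omega

theorem face_append_of_lt {x : List X} (y : List X) {i : ℕ} (h : i < x.length) :
    face act (x ++ y) i = face act x i ++ y := by
  rw [face_of_getElem?_eq_some (by rw [List.getElem?_append_left h, List.getElem?_eq_getElem h]),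
    face_of_lt h, List.take_append_of_le_length h.le, List.drop_append_of_le_length h]
  simp

theorem face_append_length_add (x : List X) {y : List X} {j : ℕ} {t : X} (h : y[j]? = some t) :
    face act (x ++ y) (x.length + j) = x.map (act · t) ++ face act y j := by
  rw [face_of_getElem?_eq_some (by rwa [List.getElem?_append_right (by omega),
    Nat.add_sub_cancel_left]), face_of_getElem?_eq_some h]
  rw [Nat.add_assoc, List.drop_length_add_append, List.take_length_add_append]
  simp

theorem face_append_singleton_length (l : List X) (t : X) :
    face act (l ++ [t]) l.length = l.map (act · t) := by
  simp [face]

theorem map_face {a b : X → X → X} (hab : ∀ s u t, a (b s u) t = b (a s t) (a u t))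
    (l : List X) (i : ℕ) (t : X) :
    (face b l i).map (a · t) = face b (l.map (a · t)) i := by
  cases h : l[i]? with
  | none => simp [face, h]
  | some u =>
    rw [face_of_getElem?_eq_some h, face_of_getElem?_eq_some (t := a u t) (by simp [h])]
    simp [List.map_take, List.map_drop, Function.comp_def, hab]

theorem face_const {l : List X} {i : ℕ} (h : i < l.length) :
    face (fun s _ => s) l i = l.eraseIdx i := by
  simp [face_of_lt h, List.eraseIdx_eq_take_drop_succ]

end Faces

section FacesOfNoncrossingWords

variable {B W : Type*} [Group W] {M : CoxeterMatrix B} {cs : CoxeterSystem M W} {γ : W}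

theorem prod_map_conjR (l : List (Refl cs)) (x : W) :
    ((l.map (conjR · x)).map Subtype.val).prod = x⁻¹ * (l.map Subtype.val).prod * x := by
  simpa [conjR] using List.prod_map_conj (l.map Subtype.val) x

theorem prod_eq_prod_take_mul_prod_drop {l : List (Refl cs)} {i : ℕ} (hi : i < l.length) :
    (l.map Subtype.val).prod =
      ((l.take i).map Subtype.val).prod * (l[i] * ((l.drop (i + 1)).map Subtype.val).prod) := by
  conv_lhs => rw [← List.take_append_drop i l, List.drop_eq_getElem_cons hi]
  rw [List.map_append, List.prod_append, List.map_cons, List.prod_cons]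

theorem IsNCWord.face_const {l : List (Refl cs)} (hl : IsNCWord cs γ l) {i : ℕ}
    (hi : i < l.length) : IsNCWord cs γ (face (fun s _ => s) l i) := by
  have hdelete : ∀ A C t : W, t * t = 1 → A * C = A * t * A⁻¹ * (A * (t * C)) := fun A C t ht => by
    rw [show A * t * A⁻¹ * (A * (t * C)) = A * (t * t) * C by group, ht, mul_one]
  refine hl.of_reflection_mul (length_face_add_one hi)
    (l[i].2.conj ((l.take i).map Subtype.val).prod) ?_
  rw [face_of_lt hi, prod_eq_prod_take_mul_prod_drop hi, List.map_id', List.map_append,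
    List.prod_append]
  exact hdelete _ _ _ (val_mul_val_self _)

theorem IsNCWord.face_conjR {l : List (Refl cs)} (hl : IsNCWord cs γ l) {i : ℕ}
    (hi : i < l.length) : IsNCWord cs γ (face (fun s t => conjR s t) l i) := by
  refine hl.of_reflection_mul (length_face_add_one hi) (r := l[i]) l[i].2 ?_
  rw [face_of_lt hi, prod_eq_prod_take_mul_prod_drop hi, List.map_append, List.prod_append,
    prod_map_conjR, l[i].2.inv]
  group

end FacesOfNoncrossingWords

section FaceSums

variable {B W : Type*} [Group W] {M : CoxeterMatrix B} (cs : CoxeterSystem M W)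

theorem mono_append (x y : List (Refl cs)) : mono cs (x ++ y) = mono cs x * mono cs y := by
  simp [mono]

theorem mono_singleton (t : Refl cs) : mono cs [t] = FreeAlgebra.ι ℤ t := by
  simp [mono]

noncomputable def faceSum (act : Refl cs → Refl cs → Refl cs) (l : List (Refl cs)) :
    FreeAlgebra ℤ (Refl cs) :=
  ∑ i ∈ Finset.range l.length, (-1 : ℤ) ^ i • mono cs (face act l i)

noncomputable def faceSum₂ (a b : Refl cs → Refl cs → Refl cs) (l : List (Refl cs)) :
    FreeAlgebra ℤ (Refl cs) :=
  ∑ i ∈ Finset.range l.length, (-1 : ℤ) ^ i • faceSum cs a (face b l i)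

variable {cs} {act : Refl cs → Refl cs → Refl cs}

theorem faceSum_append (x y : List (Refl cs)) :
    faceSum cs act (x ++ y) = faceSum cs act x * mono cs y + (-1 : ℤ) ^ x.length •
      ∑ j ∈ Finset.range y.length, (-1 : ℤ) ^ j • mono cs (face act (x ++ y) (x.length + j)) := by
  rw [faceSum, List.length_append, Finset.sum_range_add, faceSum, Finset.sum_mul, Finset.smul_sum]
  congr 1
  · refine Finset.sum_congr rfl fun i hi => ?_
    rw [face_append_of_lt y (Finset.mem_range.mp hi), mono_append, smul_mul_assoc]
  · simp only [pow_add, mul_smul]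

theorem faceSum_append_singleton (l : List (Refl cs)) (t : Refl cs) :
    faceSum cs act (l ++ [t]) =
      faceSum cs act l * FreeAlgebra.ι ℤ t + (-1 : ℤ) ^ l.length • mono cs (l.map (act · t)) := by
  rw [faceSum_append, mono_singleton]
  simp [face_append_singleton_length]

theorem faceSum₂_append_singleton {a b : Refl cs → Refl cs → Refl cs}
    (hab : ∀ s u t, a (b s u) t = b (a s t) (a u t)) (l : List (Refl cs)) (t : Refl cs) :
    faceSum₂ cs a b (l ++ [t]) = faceSum₂ cs a b l * FreeAlgebra.ι ℤ t +
      (-1 : ℤ) ^ l.length • (faceSum cs a (l.map (b · t)) - faceSum cs b (l.map (a · t))) := by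
  have hface : ∀ i ∈ Finset.range l.length, (-1 : ℤ) ^ i • faceSum cs a (face b (l ++ [t]) i) =
      (-1 : ℤ) ^ i • faceSum cs a (face b l i) * FreeAlgebra.ι ℤ t -
        (-1 : ℤ) ^ l.length • (-1 : ℤ) ^ i • mono cs (face b (l.map (a · t)) i) := by
    intro i hi
    have hi := Finset.mem_range.mp hi
    have hsign : (-1 : ℤ) ^ (face b l i).length = -(-1) ^ l.length := by
      rw [← length_face_add_one hi, pow_succ, mul_neg_one, neg_neg]
    rw [face_append_of_lt _ hi, faceSum_append_singleton, map_face hab, hsign, smul_add,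
      smul_mul_assoc, smul_comm, neg_smul, sub_eq_add_neg]
  rw [faceSum₂, List.length_append, List.length_singleton, Finset.sum_range_succ,
    Finset.sum_congr rfl hface, Finset.sum_sub_distrib, ← Finset.sum_mul, ← Finset.smul_sum,
    face_append_singleton_length, faceSum₂, smul_sub]
  rw [show ∑ i ∈ Finset.range l.length, (-1 : ℤ) ^ i • mono cs (face b (l.map (a · t)) i) =
    faceSum cs b (l.map (a · t)) by rw [faceSum, List.length_map]]
  abel

theorem faceSum₂_self_eq_zero {a : Refl cs → Refl cs → Refl cs}
    (ha : ∀ s u t, a (a s u) t = a (a s t) (a u t)) (l : List (Refl cs)) :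
    faceSum₂ cs a a l = 0 := by
  induction l using List.reverseRecOn with
  | nil => simp [faceSum₂]
  | append_singleton l t ih => rw [faceSum₂_append_singleton ha, ih]; simp

theorem faceSum₂_add_faceSum₂_swap {a b : Refl cs → Refl cs → Refl cs}
    (hab : ∀ s u t, a (b s u) t = b (a s t) (a u t))
    (hba : ∀ s u t, b (a s u) t = a (b s t) (b u t)) (l : List (Refl cs)) :
    faceSum₂ cs a b l + faceSum₂ cs b a l = 0 := by
  induction l using List.reverseRecOn with
  | nil => simp [faceSum₂]
  | append_singleton l t ih =>
    rw [faceSum₂_append_singleton hab, faceSum₂_append_singleton hba, add_add_add_comm,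
      ← add_mul, ih, ← smul_add]
    simp

theorem sum_neg_one_pow_smul_faceSum_face (a b : Refl cs → Refl cs → Refl cs)
    (l : List (Refl cs)) :
    ∑ i ∈ Finset.range l.length, (-1 : ℤ) ^ i •
      ((-1 : ℤ) ^ ((face b l i).length + 1) • faceSum cs a (face b l i)) =
        (-1 : ℤ) ^ l.length • faceSum₂ cs a b l := by
  rw [faceSum₂, Finset.smul_sum]
  refine Finset.sum_congr rfl fun i hi => ?_
  rw [length_face_add_one (Finset.mem_range.mp hi), smul_comm]

end FaceSums

section PairFactorisations

variable {B W : Type*} [Group W] [Fintype W] {M : CoxeterMatrix B} {cs : CoxeterSystem M W}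

variable (cs) in
noncomputable def pairsWithProd (w : W) : Finset (Refl cs × Refl cs) :=
  Finset.univ.filter fun p => (p.1 : W) * p.2 = w

theorem mem_pairsWithProd {w : W} {p : Refl cs × Refl cs} :
    p ∈ pairsWithProd cs w ↔ (p.1 : W) * p.2 = w := by
  simp [pairsWithProd]

theorem sum_pairsWithProd_hurwitz {N : Type*} [AddCommMonoid N] (w : W)
    (g : Refl cs × Refl cs → N) :
    ∑ p ∈ pairsWithProd cs w, g (p.2, conjR p.1 p.2) = ∑ p ∈ pairsWithProd cs w, g p := by
  refine Finset.sum_nbij' (fun p => (p.2, conjR p.1 p.2)) (fun q => (conjR q.2 q.1, q.1))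
    ?_ ?_ ?_ ?_ fun _ _ => rfl <;> intro p hp
  · rw [mem_pairsWithProd] at hp ⊢
    rw [← hp, val_mul_conjR_self]
  · rw [mem_pairsWithProd] at hp ⊢
    rw [← hp, conjR_mul_val_self]
  all_goals simp

theorem sum_pairsWithProd_conjR {N : Type*} [AddCommMonoid N] (w x : W)
    (g : Refl cs × Refl cs → N) :
    ∑ p ∈ pairsWithProd cs w, g (conjR p.1 x, conjR p.2 x) =
      ∑ p ∈ pairsWithProd cs (x⁻¹ * w * x), g p := by
  refine Finset.sum_nbij' (fun p => (conjR p.1 x, conjR p.2 x))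
    (fun q => (conjR q.1 x⁻¹, conjR q.2 x⁻¹)) ?_ ?_ ?_ ?_ fun _ _ => rfl <;> intro p hp
  · rw [mem_pairsWithProd] at hp ⊢
    simp [conjR, ← hp, mul_assoc]
  · rw [mem_pairsWithProd] at hp ⊢
    simp only [conjR, inv_inv]
    rw [show x * p.1 * x⁻¹ * (x * p.2 * x⁻¹) = x * (p.1 * p.2) * x⁻¹ by group, hp]
    group
  all_goals simp

variable {γ : W}

theorem mkAlgHom_sum_pairsWithProd {w : W} (hw : absLen cs w = 2) :
    RingQuot.mkAlgHom ℤ (NCRel cs γ)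
      (∑ p ∈ pairsWithProd cs w, FreeAlgebra.ι ℤ p.1 * FreeAlgebra.ι ℤ p.2) = 0 := by
  by_cases hle : absLe cs w γ
  · simpa [pairsWithProd, Finset.sum_filter] using RingQuot.mkAlgHom_rel ℤ (NCRel.sum w hw hle)
  · refine (map_sum _ _ _).trans (Finset.sum_eq_zero fun p hp => ?_)
    rw [mem_pairsWithProd] at hp
    simpa using RingQuot.mkAlgHom_rel ℤ (NCRel.ncross (γ := γ) p.1 p.2 (hp ▸ hle))

end PairFactorisations

section FaceSumRelation

variable {B W : Type*} [Group W] {M : CoxeterMatrix B} {cs : CoxeterSystem M W}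

theorem mono_append_pair_append (u v : List (Refl cs)) (t₁ t₂ : Refl cs) :
    mono cs (u ++ [t₁, t₂] ++ v) =
      mono cs u * (FreeAlgebra.ι ℤ t₁ * FreeAlgebra.ι ℤ t₂) * mono cs v := by
  simp [mono, mul_assoc]

theorem faceSum_append_pair (act : Refl cs → Refl cs → Refl cs) (u : List (Refl cs))
    (t₁ t₂ : Refl cs) :
    faceSum cs act (u ++ [t₁, t₂]) =
      faceSum cs act u * (FreeAlgebra.ι ℤ t₁ * FreeAlgebra.ι ℤ t₂) +
      (-1 : ℤ) ^ u.length • (mono cs (u.map (act · t₁)) * FreeAlgebra.ι ℤ t₂ -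
        mono cs (u.map (act · t₂)) * FreeAlgebra.ι ℤ (act t₁ t₂)) := by
  rw [show u ++ [t₁, t₂] = u ++ [t₁] ++ [t₂] by simp, faceSum_append_singleton,
    faceSum_append_singleton, List.map_append, mono_append, List.map_singleton, mono_singleton,
    List.length_append, List.length_singleton, pow_succ, mul_neg_one, neg_smul, smul_sub]
  simp only [add_mul, smul_mul_assoc, mul_assoc]
  abel

theorem faceSum_append_pair_append (act : Refl cs → Refl cs → Refl cs)
    (u v : List (Refl cs)) (t₁ t₂ : Refl cs) :
    faceSum cs act (u ++ [t₁, t₂] ++ v) =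
      faceSum cs act u * (FreeAlgebra.ι ℤ t₁ * FreeAlgebra.ι ℤ t₂) * mono cs v +
      (-1 : ℤ) ^ u.length • ((mono cs (u.map (act · t₁)) * FreeAlgebra.ι ℤ t₂ -
        mono cs (u.map (act · t₂)) * FreeAlgebra.ι ℤ (act t₁ t₂)) * mono cs v) +
      (-1 : ℤ) ^ u.length • ∑ j ∈ Finset.range v.length,
        (-1 : ℤ) ^ j • mono cs (face act (u ++ [t₁, t₂] ++ v) (u.length + 2 + j)) := by
  have hlen : (u ++ [t₁, t₂]).length = u.length + 2 := by simp
  rw [faceSum_append, faceSum_append_pair, hlen, pow_add, neg_one_sq, mul_one, add_mul,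
    smul_mul_assoc]

variable [Fintype W] {γ : W}

theorem mkAlgHom_sum_faceSum_pairsWithProd {act : Refl cs → Refl cs → Refl cs}
    (hmid : ∀ (u : List (Refl cs)) (w : W),
      ∑ p ∈ pairsWithProd cs w, mono cs (u.map (act · p.1)) * FreeAlgebra.ι ℤ p.2 =
        ∑ p ∈ pairsWithProd cs w, mono cs (u.map (act · p.2)) * FreeAlgebra.ι ℤ (act p.1 p.2))
    (htail : ∀ (x : Refl cs) {w : W}, absLen cs w = 2 → RingQuot.mkAlgHom ℤ (NCRel cs γ)
      (∑ p ∈ pairsWithProd cs w, FreeAlgebra.ι ℤ (act p.1 x) * FreeAlgebra.ι ℤ (act p.2 x)) = 0)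
    (u v : List (Refl cs)) {w : W} (hw : absLen cs w = 2) :
    RingQuot.mkAlgHom ℤ (NCRel cs γ)
      (∑ p ∈ pairsWithProd cs w, faceSum cs act (u ++ [p.1, p.2] ++ v)) = 0 := by
  have hlast : ∀ j ∈ Finset.range v.length, RingQuot.mkAlgHom ℤ (NCRel cs γ)
      (∑ p ∈ pairsWithProd cs w, mono cs (face act (u ++ [p.1, p.2] ++ v) (u.length + 2 + j))) =
        0 := by
    intro j hj
    obtain ⟨x, hx⟩ : ∃ x, v[j]? = some x :=
      ⟨_, List.getElem?_eq_getElem (Finset.mem_range.mp hj)⟩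
    have hface : ∀ p : Refl cs × Refl cs, face act (u ++ [p.1, p.2] ++ v) (u.length + 2 + j) =
        u.map (act · x) ++ [act p.1 x, act p.2 x] ++ face act v j := by
      intro p
      rw [show u.length + 2 = (u ++ [p.1, p.2]).length by simp, face_append_length_add _ hx]
      simp
    simp only [hface, mono_append_pair_append, ← Finset.sum_mul, ← Finset.mul_sum, map_mul,
      htail x hw, mul_zero, zero_mul]
  rw [Finset.sum_congr rfl fun p _ => faceSum_append_pair_append act u v p.1 p.2,
    Finset.sum_add_distrib, Finset.sum_add_distrib, ← Finset.smul_sum, ← Finset.smul_sum,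
    ← Finset.sum_mul, ← Finset.sum_mul, ← Finset.mul_sum, Finset.sum_sub_distrib, hmid, sub_self,
    zero_mul, smul_zero, add_zero, map_add, map_mul, map_mul, mkAlgHom_sum_pairsWithProd hw,
    mul_zero, zero_mul, zero_add, Finset.sum_comm, map_smul, map_sum,
    Finset.sum_eq_zero fun j hj => ?_]
  · exact smul_zero _
  · rw [← Finset.smul_sum, map_smul, hlast j hj]
    exact smul_zero _

theorem mkAlgHom_sum_faceSum_const (u v : List (Refl cs)) {w : W} (hw : absLen cs w = 2) :
    RingQuot.mkAlgHom ℤ (NCRel cs γ)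
      (∑ p ∈ pairsWithProd cs w, faceSum cs (fun s _ => s) (u ++ [p.1, p.2] ++ v)) = 0 :=
  mkAlgHom_sum_faceSum_pairsWithProd
    (fun u w => by simpa using sum_pairsWithProd_hurwitz w fun q => mono cs u * FreeAlgebra.ι ℤ q.1)
    (fun _ _ hw => mkAlgHom_sum_pairsWithProd hw) u v hw

theorem mkAlgHom_sum_faceSum_conjR (u v : List (Refl cs)) {w : W} (hw : absLen cs w = 2) :
    RingQuot.mkAlgHom ℤ (NCRel cs γ)
      (∑ p ∈ pairsWithProd cs w, faceSum cs (fun s t => conjR s t) (u ++ [p.1, p.2] ++ v)) = 0 :=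
  mkAlgHom_sum_faceSum_pairsWithProd
    (fun u w => (sum_pairsWithProd_hurwitz w fun q =>
      mono cs (u.map (conjR · q.1)) * FreeAlgebra.ι ℤ q.2).symm)
    (fun x w hw => by
      rw [sum_pairsWithProd_conjR w x fun q => FreeAlgebra.ι ℤ q.1 * FreeAlgebra.ι ℤ q.2]
      exact mkAlgHom_sum_pairsWithProd (by rwa [absLen_conj]))
    u v hw

end FaceSumRelation

section Truncation

variable {B W : Type*} [Group W] {M : CoxeterMatrix B} (cs : CoxeterSystem M W) (γ : W)

theorem basisFreeMonoid_ofList (l : List (Refl cs)) :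
    FreeAlgebra.basisFreeMonoid ℤ (Refl cs) (FreeMonoid.ofList l) = mono cs l := by
  simp [FreeAlgebra.basisFreeMonoid, FreeAlgebra.equivMonoidAlgebraFreeMonoid,
    MonoidAlgebra.lift_single, mono]
  exact one_smul ℤ _

noncomputable def truncation (f : List (Refl cs) → FreeAlgebra ℤ (Refl cs)) :
    FreeAlgebra ℤ (Refl cs) →ₗ[ℤ] FreeAlgebra ℤ (Refl cs) :=
  (FreeAlgebra.basisFreeMonoid ℤ (Refl cs)).constr ℤ fun m =>
    if IsNCWord cs γ m.toList then f m.toList else 0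

variable {cs γ}

theorem truncation_mono (f : List (Refl cs) → FreeAlgebra ℤ (Refl cs)) (l : List (Refl cs)) :
    truncation cs γ f (mono cs l) = if IsNCWord cs γ l then f l else 0 := by
  rw [← basisFreeMonoid_ofList, ← FreeMonoid.toList_ofList l]
  -- `constr` is linear for `Algebra.toModule`, the type above for `AddCommGroup.toIntModule`;
  -- the two agree only up to unfolding, which `rw` does not do.
  exact Module.Basis.constr_basis _ _ _ _

theorem linearMap_ext_mono {F G : FreeAlgebra ℤ (Refl cs) →ₗ[ℤ] FreeAlgebra ℤ (Refl cs)}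
    (h : ∀ l, F (mono cs l) = G (mono cs l)) : F = G :=
  (FreeAlgebra.basisFreeMonoid ℤ (Refl cs)).ext fun m => by
    rw [← FreeMonoid.ofList_toList m, basisFreeMonoid_ofList]
    exact h m.toList

theorem truncation_faceSum (f : List (Refl cs) → FreeAlgebra ℤ (Refl cs))
    {act : Refl cs → Refl cs → Refl cs}
    (hact : ∀ {l : List (Refl cs)} {i : ℕ}, IsNCWord cs γ l → i < l.length →
      IsNCWord cs γ (face act l i))
    {l : List (Refl cs)} (hl : IsNCWord cs γ l) :
    truncation cs γ f (faceSum cs act l) =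
      ∑ i ∈ Finset.range l.length, (-1 : ℤ) ^ i • f (face act l i) := by
  rw [faceSum, map_sum]
  refine Finset.sum_congr rfl fun i hi => ?_
  rw [map_smul, truncation_mono, if_pos (hact hl (Finset.mem_range.mp hi))]

end Truncation

section BoundaryMaps

variable {B W : Type*} [Group W] {M : CoxeterMatrix B} {cs : CoxeterSystem M W} {γ : W}

theorem faceSum_const_eq (l : List (Refl cs)) :
    (-1 : ℤ) ^ (l.length + 1) • faceSum cs (fun s _ => s) l =
      ∑ i : Fin l.length, (-1 : ℤ) ^ (l.length - 1 - i) • mono cs (l.eraseIdx i) := by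
  rw [faceSum, Finset.smul_sum, ← Fin.sum_univ_eq_sum_range]
  refine Finset.sum_congr rfl fun i _ => ?_
  rw [face_const i.2, smul_smul, ← pow_add]
  congr 1
  rw [show l.length + 1 + i = (l.length - 1 - i) + 2 * (i + 1) by omega, pow_add, pow_mul,
    neg_one_sq, one_pow, mul_one]

theorem faceSum_conjR_eq (l : List (Refl cs)) :
    faceSum cs (fun s t => conjR s t) l = ∑ i : Fin l.length, (-1 : ℤ) ^ (i : ℕ) •
      mono cs ((l.take i).map (fun s => conjR s (l.get i : W)) ++ l.drop (i + 1)) := by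
  rw [faceSum, ← Fin.sum_univ_eq_sum_range (fun i => (-1 : ℤ) ^ i • mono cs (face _ l i))]
  refine Finset.sum_congr rfl fun i _ => ?_
  rw [face_of_lt i.2, List.get_eq_getElem]

variable (cs γ)

noncomputable def dFree :=
  truncation cs γ fun l => (-1 : ℤ) ^ (l.length + 1) • faceSum cs (fun s _ => s) l

noncomputable def δFree :=
  truncation cs γ (faceSum cs fun s t => conjR s t)

variable {cs γ}

theorem dFree_comp_dFree : dFree cs γ ∘ₗ dFree cs γ = 0 := by
  refine linearMap_ext_mono fun l => ?_
  by_cases hl : IsNCWord cs γ l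
  · rw [LinearMap.comp_apply, dFree, truncation_mono, if_pos hl, map_smul,
      truncation_faceSum _ (fun hl hi => hl.face_const hi) hl, sum_neg_one_pow_smul_faceSum_face,
      faceSum₂_self_eq_zero fun _ _ _ => rfl]
    simp
  · rw [LinearMap.comp_apply, dFree, truncation_mono, if_neg hl, map_zero]
    rfl

theorem δFree_comp_δFree : δFree cs γ ∘ₗ δFree cs γ = 0 := by
  refine linearMap_ext_mono fun l => ?_
  by_cases hl : IsNCWord cs γ l
  · rw [LinearMap.comp_apply, δFree, truncation_mono, if_pos hl,
      truncation_faceSum _ (fun hl hi => hl.face_conjR hi) hl]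
    exact faceSum₂_self_eq_zero (fun s u t => conjR_conjR_conjR s u t) l
  · rw [LinearMap.comp_apply, δFree, truncation_mono, if_neg hl, map_zero]
    rfl

theorem dFree_comp_δFree : dFree cs γ ∘ₗ δFree cs γ = δFree cs γ ∘ₗ dFree cs γ := by
  refine linearMap_ext_mono fun l => ?_
  by_cases hl : IsNCWord cs γ l
  · rw [LinearMap.comp_apply, LinearMap.comp_apply, δFree, dFree, truncation_mono, if_pos hl,
      truncation_mono, if_pos hl, truncation_faceSum _ (fun hl hi => hl.face_conjR hi) hl,
      map_smul, truncation_faceSum _ (fun hl hi => hl.face_const hi) hl,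
      sum_neg_one_pow_smul_faceSum_face, ← faceSum₂,
      eq_neg_of_add_eq_zero_left (faceSum₂_add_faceSum₂_swap (a := fun s _ => s)
        (b := fun s t => conjR s t) (fun _ _ _ => rfl) (fun _ _ _ => rfl) l), pow_succ]
    simp
  · rw [LinearMap.comp_apply, LinearMap.comp_apply, δFree, dFree, truncation_mono, if_neg hl,
      truncation_mono, if_neg hl, map_zero, map_zero]

end BoundaryMaps

section NoncrossingAlgebra

variable {B W : Type*} [Group W] [Fintype W] {M : CoxeterMatrix B} {cs : CoxeterSystem M W}
  {γ : W}

theorem mkAlgHom_truncation_relation {f : List (Refl cs) → FreeAlgebra ℤ (Refl cs)}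
    (hf : ∀ u v {w : W}, absLen cs w = 2 → RingQuot.mkAlgHom ℤ (NCRel cs γ)
      (∑ p ∈ pairsWithProd cs w, f (u ++ [p.1, p.2] ++ v)) = 0)
    {x y : FreeAlgebra ℤ (Refl cs)} (hxy : NCRel cs γ x y) (u v : List (Refl cs)) :
    RingQuot.mkAlgHom ℤ (NCRel cs γ) (truncation cs γ f (mono cs u * (x - y) * mono cs v)) = 0 := by
  cases hxy with
  | sq t =>
    rw [sub_zero, ← mono_append_pair_append, truncation_mono,
      if_neg fun h => by simpa [absLen_one] using h.absLen_pair.1, map_zero]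
  | ncross t₁ t₂ hn =>
    rw [sub_zero, ← mono_append_pair_append, truncation_mono,
      if_neg fun h => hn h.absLen_pair.2, map_zero]
  | sum w hw _ =>
    have hsum : (∑ p : Refl cs × Refl cs, if (p.1 : W) * p.2 = w then
        FreeAlgebra.ι ℤ p.1 * FreeAlgebra.ι ℤ p.2 else 0) =
          ∑ p ∈ pairsWithProd cs w, FreeAlgebra.ι ℤ p.1 * FreeAlgebra.ι ℤ p.2 := by
      simp [pairsWithProd, Finset.sum_filter]
    rw [sub_zero, hsum, Finset.mul_sum, Finset.sum_mul, map_sum]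
    simp only [← mono_append_pair_append, truncation_mono]
    by_cases hNC : ∀ p ∈ pairsWithProd cs w, IsNCWord cs γ (u ++ [p.1, p.2] ++ v)
    · rw [Finset.sum_congr rfl fun p hp => if_pos (hNC p hp)]
      exact hf u v hw
    · obtain ⟨p₀, hp₀, hp₀NC⟩ := not_forall₂.mp hNC
      rw [Finset.sum_eq_zero fun p hp => if_neg ?_, map_zero]
      rwa [isNCWord_congr (l' := u ++ [p₀.1, p₀.2] ++ v) (by simp)]
      simp only [List.map_append, List.prod_append, List.map_cons, List.map_nil, List.prod_cons,
        List.prod_nil, mul_one, mem_pairsWithProd.mp hp, mem_pairsWithProd.mp hp₀]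

theorem exists_linearMap_mkAlgHom_truncation {f : List (Refl cs) → FreeAlgebra ℤ (Refl cs)}
    (hf : ∀ u v {w : W}, absLen cs w = 2 → RingQuot.mkAlgHom ℤ (NCRel cs γ)
      (∑ p ∈ pairsWithProd cs w, f (u ++ [p.1, p.2] ++ v)) = 0) :
    ∃ g : RingQuot (NCRel cs γ) →ₗ[ℤ] RingQuot (NCRel cs γ),
      ∀ x, g (RingQuot.mkAlgHom ℤ (NCRel cs γ) x) =
        RingQuot.mkAlgHom ℤ (NCRel cs γ) (truncation cs γ f x) :=
  RingQuot.exists_lift_linearMap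
    (f := (RingQuot.mkAlgHom ℤ (NCRel cs γ)).toLinearMap ∘ₗ truncation cs γ f)
    fun _ _ hxy => (FreeAlgebra.basisFreeMonoid ℤ (Refl cs)).forall_mul_mul_eq_zero fun i j => by
      rw [← FreeMonoid.ofList_toList i, ← FreeMonoid.ofList_toList j, basisFreeMonoid_ofList,
        basisFreeMonoid_ofList]
      exact mkAlgHom_truncation_relation hf hxy _ _

theorem exists_linearMap_mkAlgHom_dFree :
    ∃ d : RingQuot (NCRel cs γ) →ₗ[ℤ] RingQuot (NCRel cs γ),
      ∀ x, d (RingQuot.mkAlgHom ℤ (NCRel cs γ) x) =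
        RingQuot.mkAlgHom ℤ (NCRel cs γ) (dFree cs γ x) := by
  refine exists_linearMap_mkAlgHom_truncation fun u v w hw => ?_
  have hlen : ∀ p : Refl cs × Refl cs, (u ++ [p.1, p.2] ++ v).length = u.length + v.length + 2 :=
    fun p => by simp; omega
  simp only [hlen, ← Finset.smul_sum]
  rw [map_smul, mkAlgHom_sum_faceSum_const u v hw]
  exact smul_zero _

theorem exists_linearMap_mkAlgHom_δFree :
    ∃ δ : RingQuot (NCRel cs γ) →ₗ[ℤ] RingQuot (NCRel cs γ),
      ∀ x, δ (RingQuot.mkAlgHom ℤ (NCRel cs γ) x) =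
        RingQuot.mkAlgHom ℤ (NCRel cs γ) (δFree cs γ x) :=
  exists_linearMap_mkAlgHom_truncation fun u v _ hw => mkAlgHom_sum_faceSum_conjR u v hw

end NoncrossingAlgebra

theorem noncrossing_d_delta_general (B : Type*) (W : Type*) [Group W] [Fintype W]
    (M : CoxeterMatrix B) (cs : CoxeterSystem M W)
    (γ : W) :
    ∃ d δ : RingQuot (NCRel cs γ) →ₗ[ℤ] RingQuot (NCRel cs γ),
      (∀ l : List (Refl cs), IsNCWord cs γ l →
        d (RingQuot.mkAlgHom ℤ (NCRel cs γ) (mono cs l)) =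
          ∑ i : Fin l.length, ((-1 : ℤ) ^ (l.length - 1 - (i : ℕ))) •
            RingQuot.mkAlgHom ℤ (NCRel cs γ) (mono cs (l.eraseIdx (i : ℕ)))) ∧
      (∀ l : List (Refl cs), IsNCWord cs γ l →
        δ (RingQuot.mkAlgHom ℤ (NCRel cs γ) (mono cs l)) =
          ∑ i : Fin l.length, ((-1 : ℤ) ^ (i : ℕ)) •
            RingQuot.mkAlgHom ℤ (NCRel cs γ)
              (mono cs ((l.take (i : ℕ)).map (fun s => conjR s (l.get i : W))
                ++ l.drop ((i : ℕ) + 1)))) ∧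
      d ∘ₗ d = 0 ∧ δ ∘ₗ δ = 0 ∧ d ∘ₗ δ = δ ∘ₗ d := by
  obtain ⟨d, hd⟩ := exists_linearMap_mkAlgHom_dFree (cs := cs) (γ := γ)
  obtain ⟨δ, hδ⟩ := exists_linearMap_mkAlgHom_δFree (cs := cs) (γ := γ)
  have hsurj := RingQuot.mkAlgHom_surjective ℤ (NCRel cs γ)
  refine ⟨d, δ, fun l hl => ?_, fun l hl => ?_, LinearMap.ext (hsurj.forall.2 fun x => ?_),
    LinearMap.ext (hsurj.forall.2 fun x => ?_), LinearMap.ext (hsurj.forall.2 fun x => ?_)⟩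
  · rw [hd, dFree, truncation_mono, if_pos hl, faceSum_const_eq, map_sum]
    exact Finset.sum_congr rfl fun i _ => map_smul _ _ _
  · rw [hδ, δFree, truncation_mono, if_pos hl, faceSum_conjR_eq, map_sum]
    exact Finset.sum_congr rfl fun i _ => map_smul _ _ _
  · rw [LinearMap.comp_apply, hd, hd, ← LinearMap.comp_apply, dFree_comp_dFree]
    simp
  · rw [LinearMap.comp_apply, hδ, hδ, ← LinearMap.comp_apply, δFree_comp_δFree]
    simp
  · rw [LinearMap.comp_apply, LinearMap.comp_apply, hδ, hd, hd, hδ, ← LinearMap.comp_apply,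
      dFree_comp_δFree, LinearMap.comp_apply]

/-- On the noncrossing algebra `𝒜` of a finite Coxeter group `W` with
Coxeter element `γ`, the truncation maps `d` and `δ` given on (reduced, `≤ γ`) monomials
by `d(a_{t₁}⋯a_{t_k}) = Σ_i (−1)^{k−i} a_{t₁}⋯â_{t_i}⋯a_{t_k}` and
`δ(a_{t₁}⋯a_{t_k}) = Σ_i (−1)^{i−1} a_{t₁^{t_i}}⋯a_{t_{i−1}^{t_i}} â_{t_i}
a_{t_{i+1}}⋯a_{t_k}` are well-defined, and satisfy `d² = 0`, `δ² = 0` and `dδ = δd`. -/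
theorem noncrossing_d_delta (B : Type*) (W : Type*) [Group W] [Fintype W]
    (M : CoxeterMatrix B) (cs : CoxeterSystem M W)
    (γ : W)
    (hγ : ∃ ω : List B, ω.Nodup ∧ (∀ b : B, b ∈ ω) ∧ γ = cs.wordProd ω) :
    ∃ d δ : RingQuot (NCRel cs γ) →ₗ[ℤ] RingQuot (NCRel cs γ),
      (∀ l : List (Refl cs), IsNCWord cs γ l →
        d (RingQuot.mkAlgHom ℤ (NCRel cs γ) (mono cs l)) =
          ∑ i : Fin l.length, ((-1 : ℤ) ^ (l.length - 1 - (i : ℕ))) •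
            RingQuot.mkAlgHom ℤ (NCRel cs γ) (mono cs (l.eraseIdx (i : ℕ)))) ∧
      (∀ l : List (Refl cs), IsNCWord cs γ l →
        δ (RingQuot.mkAlgHom ℤ (NCRel cs γ) (mono cs l)) =
          ∑ i : Fin l.length, ((-1 : ℤ) ^ (i : ℕ)) •
            RingQuot.mkAlgHom ℤ (NCRel cs γ)
              (mono cs ((l.take (i : ℕ)).map (fun s => conjR s (l.get i : W))
                ++ l.drop ((i : ℕ) + 1)))) ∧
      d ∘ₗ d = 0 ∧ δ ∘ₗ δ = 0 ∧ d ∘ₗ δ = δ ∘ₗ d :=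
  noncrossing_d_delta_general B W M cs γ
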